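/- The second prolongation of co(q,n−q) is zero for n ≥ 3: if t : ℝⁿ×ℝⁿ×ℝⁿ→ℝⁿ is a symmetric trilinear map such that for every fixed u, the bilinear map t(u,·,·) lies in the first prolongation co(q,n−q)₁, then t = 0. -/
import Mathlib


open Matrix BigOperators

/-- `GL(n,ℝ)`. -/
abbrev GLn (n : ℕ) := GL (Fin n) ℝ

/-- Component arrays `s i j k = s(e_j, e_k)^i` of bilinear maps `ℝⁿ×ℝⁿ→ℝⁿ`. -/
abbrev Tn (n : ℕ) := Fin n → Fin n → Fin n → ℝ

/-- Symmetry of a bilinear map in components. -/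
def IsSym (n : ℕ) (s : Tn n) : Prop := ∀ i j k, s i j k = s i k j

/-- The matrix of the linear map `s(u,·)`. -/
def matOf (n : ℕ) (s : Tn n) (u : Fin n → ℝ) : Matrix (Fin n) (Fin n) ℝ :=
  Matrix.of fun i k => ∑ j, s i j k * u j

/-- The metric `η = diag(−I_q, I_{n−q})`. -/
def eta (n q : ℕ) : Matrix (Fin n) (Fin n) ℝ :=
  Matrix.diagonal fun i => if (i : ℕ) < q then (-1 : ℝ) else 1

/-- The action `s ↦ b⁻¹ ∘ s(b·, b·)` in components. -/
def actGL (n : ℕ) (b : GLn n) (s : Tn n) : Tn n := fun i j k =>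
  ∑ p, ∑ q, ∑ r,
    (↑(b⁻¹) : Matrix (Fin n) (Fin n) ℝ) i p * s p q r *
      (↑b : Matrix (Fin n) (Fin n) ℝ) q j * (↑b : Matrix (Fin n) (Fin n) ℝ) r k

lemma actGL_isSym (n : ℕ) (b : GLn n) (s : Tn n) (hs : IsSym n s) :
    IsSym n (actGL n b s) := by
  intro i j k
  unfold actGL
  refine Finset.sum_congr rfl fun p _ => ?_
  conv_lhs => rw [Finset.sum_comm]
  refine Finset.sum_congr rfl fun x _ => Finset.sum_congr rfl fun y _ => ?_
  rw [hs p x y]; ring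

/-- The additive group `S²ₙ` of symmetric bilinear maps, in components. -/
def S2 (n : ℕ) := {s : Tn n // IsSym n s}

instance (n : ℕ) : Zero (S2 n) := ⟨⟨0, fun _ _ _ => rfl⟩⟩

instance (n : ℕ) : Add (S2 n) :=
  ⟨fun s t => ⟨s.1 + t.1, fun i j k => by
    simp only [Pi.add_apply, s.2 i j k, t.2 i j k]⟩⟩

/-- The multiplication `(a,s)(b,t) = (ab, b⁻¹∘s(b·,b·) + t)` on `GL(n,ℝ) × S²ₙ`. -/
def g2mul (n : ℕ) (x y : GLn n × S2 n) : GLn n × S2 n :=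
  (x.1 * y.1, ⟨actGL n y.1 x.2.1 + y.2.1, fun i j k => by
    simp only [Pi.add_apply, actGL_isSym n y.1 x.2.1 x.2.2 i j k, y.2.2 i j k]⟩)

/-- The identity `(I, 0)`. -/
def g2one (n : ℕ) : GLn n × S2 n := (1, 0)

/-- Same multiplication on raw (not necessarily symmetric) component arrays. -/
def g2mulR (n : ℕ) (x y : GLn n × Tn n) : GLn n × Tn n :=
  (x.1 * y.1, actGL n y.1 x.2 + y.2)

/-- Projective element: `(s_μ)^i_{jk} = δ^i_j μ_k + δ^i_k μ_j`. -/
def pmu (n : ℕ) (μ : Fin n → ℝ) : Tn n := fun i j k =>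
  (if i = j then μ k else 0) + (if i = k then μ j else 0)

/-- Conformal element:
`(s_μ)^i_{jk} = δ^i_j μ_k + δ^i_k μ_j − (∑ₜ η^{it} μ_t) η_{jk}`. -/
def smuCO (n q : ℕ) (μ : Fin n → ℝ) : Tn n := fun i j k =>
  (if i = j then μ k else 0) + (if i = k then μ j else 0) -
    (∑ t, eta n q i t * μ t) * eta n q j k


lemma exists_ne_ne {n : ℕ} (hn : 3 ≤ n) (a b : Fin n) : ∃ c : Fin n, c ≠ a ∧ c ≠ b := by
  have h1 : ({a, b} : Finset (Fin n)).card ≤ 2 := by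
    apply (Finset.card_insert_le _ _).trans; simp
  have h2 : (({a, b} : Finset (Fin n))ᶜ).card = n - ({a,b} : Finset (Fin n)).card := by
    rw [Finset.card_compl]; simp
  have h3 : (({a, b} : Finset (Fin n))ᶜ).Nonempty := by
    rw [← Finset.card_pos]; omega
  obtain ⟨c, hc⟩ := h3
  simp only [Finset.mem_compl, Finset.mem_insert, Finset.mem_singleton, not_or] at hc
  exact ⟨c, hc.1, hc.2⟩


/-- the second prolongation of `co(q,n−q)` is zero for `n ≥ 3`. -/
theorem statement7 (n q : ℕ) (hn : 3 ≤ n) (hq : q ≤ n)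
    (t : Fin n → Fin n → Fin n → Fin n → ℝ)
    (hsym1 : ∀ i j k l, t i j k l = t i k j l)
    (hsym2 : ∀ i j k l, t i j k l = t i j l k)
    (h : ∀ u : Fin n → ℝ, ∃ μ : Fin n → ℝ,
      (fun i k l => ∑ j, t i j k l * u j) = smuCO n q μ) :
    t = 0 := by
  classical
  set ε : Fin n → ℝ := fun i => if (i : ℕ) < q then (-1 : ℝ) else 1 with hε
  have hεsq : ∀ i, ε i * ε i = 1 := by
    intro i; simp only [hε]; split <;> norm_num
  have hM : ∀ j : Fin n, ∃ μ : Fin n → ℝ, ∀ i k l, t i j k l = smuCO n q μ i k l := by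
    intro j
    obtain ⟨μ, hμ⟩ := h (fun p => if p = j then 1 else 0)
    refine ⟨μ, fun i k l => ?_⟩
    have := congrFun (congrFun (congrFun hμ i) k) l
    simpa [mul_ite, mul_one, mul_zero, Finset.sum_ite_eq'] using this
  choose M hMe using hM
  have keq : ∀ i j k l, t i j k l =
      (if i = k then M j l else 0) + (if i = l then M j k else 0) -
        (ε i * M j i) * (if k = l then ε k else 0) := by
    intro i j k l
    rw [hMe j i k l]
    have hsum : (∑ x, eta n q i x * M j x) = ε i * M j i := by
      simp only [eta, Matrix.diagonal_apply]
      rw [Finset.sum_eq_single i (fun b _ hb => by simp [Ne.symm hb])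
        (fun hi => absurd (Finset.mem_univ i) hi)]
      simp [hε]
    simp only [smuCO]
    rw [hsum]
    simp only [eta, Matrix.diagonal_apply, hε]
  -- off-diagonal entries vanish
  have offd : ∀ j l, j ≠ l → M j l = 0 := by
    intro j l hjl
    obtain ⟨i, hij, hil⟩ := exists_ne_ne hn j l
    have := hsym1 i j i l
    rw [keq i j i l, keq i i j l] at this
    simp [hij, hil, hjl, Ne.symm hij] at this
    exact this
  -- diagonal relation
  have diagrel : ∀ i k, i ≠ k → M k k = -(ε i * ε k) * M i i := by
    intro i k hik
    have := hsym1 i i k k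
    rw [keq i i k k, keq i k i k] at this
    simp [hik, Ne.symm hik] at this
    linarith [this]
  have diag0 : ∀ m, M m m = 0 := by
    intro m
    obtain ⟨i, him, _⟩ := exists_ne_ne hn m m
    obtain ⟨k, hki, hkm⟩ := exists_ne_ne hn i m
    have h1 := diagrel i m him
    have h2 := diagrel k i hki
    have h3 := diagrel k m hkm
    have e1 : M m m = ε m * ε k * M k k := by
      calc M m m = -(ε i * ε m) * (-(ε k * ε i) * M k k) := by rw [h1, h2]
      _ = (ε i * ε i) * (ε m * ε k * M k k) := by ring
      _ = ε m * ε k * M k k := by rw [hεsq i]; ring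
    have e2 : (2:ℝ) * (ε m * ε k) * M k k = 0 := by
      have := h3; rw [e1] at this; linarith
    have e3 : M k k = 0 := by
      have h4 : ε m * ε k * ((2:ℝ) * (ε m * ε k) * M k k) = 0 := by rw [e2]; ring
      have h5 : ε m * ε k * ((2:ℝ) * (ε m * ε k) * M k k)
          = (ε m * ε m) * (ε k * ε k) * (2 * M k k) := by ring
      rw [h5, hεsq m, hεsq k] at h4; linarith
    rw [h3, e3]; ring
  have Mzero : ∀ j l, M j l = 0 := by
    intro j l
    by_cases hjl : j = l
    · subst hjl; exact diag0 j
    · exact offd j l hjl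
  funext i j k l
  rw [keq i j k l, Mzero, Mzero, Mzero]
  simp
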